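/- arXiv:1502.04776 — 3 statements merged into one kernel-verified Lean document; each statement's English description precedes it below -/
import Mathlib

section
/- In ZM(m,n,r), the subgroup H = ⟨a^{m₁}, b^{n₁}⟩ (where m₁ | m and n₁ | n) is normal if and only if m₁ divides gcd(m, r^{n₁} − 1). -/
def ZMrels (m n : ℕ) (r : ℤ) : Set (FreeGroup Bool) :=
  {FreeGroup.of true ^ m, FreeGroup.of false ^ n,
   (FreeGroup.of false)⁻¹ * FreeGroup.of true * FreeGroup.of false * (FreeGroup.of true) ^ (-r)}

abbrev ZM (m n : ℕ) (r : ℤ) : Type := PresentedGroup (ZMrels m n r)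

def ZMa (m n : ℕ) (r : ℤ) : ZM m n r := PresentedGroup.of true

def ZMb (m n : ℕ) (r : ℤ) : ZM m n r := PresentedGroup.of false

/-!
Since `a⁻¹ * b ^ n₁ * a = b ^ n₁ * a ^ (1 - r ^ n₁)`, the subgroup `H = ⟨a ^ m₁, b ^ n₁⟩` is normal
exactly when `a ^ (r ^ n₁ - 1) ∈ H` (conjugating `a ^ m₁` by `b` only raises it to a power). To see
that `a ^ k ∈ H` forces `m₁ ∣ k`, let `ZM m n r` act on `ZMod m₁` with `a` translating by `1` and
`b` multiplying by `r⁻¹` (a unit, as `r ^ n ≡ 1 mod m₁`): `H` fixes `0`, while `a ^ k` sends it to `k`.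
-/

namespace Subgroup

variable {G : Type*} [Group G]

theorem normal_closure_of_conj_mem {S T : Set G} (hT : closure T = ⊤)
    (hconj : ∀ t ∈ T, ∀ s ∈ S, t * s * t⁻¹ ∈ closure S ∧ t⁻¹ * s * t ∈ closure S) :
    (closure S).Normal := by
  have conj_mem_of_gen (g : G) (hg : ∀ s ∈ S, g * s * g⁻¹ ∈ closure S) :
      ∀ x ∈ closure S, g * x * g⁻¹ ∈ closure S := by
    have : (closure S).map (MulAut.conj g).toMonoidHom ≤ closure S := by
      rw [MonoidHom.map_closure, closure_le]
      rintro _ ⟨s, hs, rfl⟩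
      exact hg s hs
    exact fun x hx ↦ this ⟨x, hx, rfl⟩
  refine ⟨fun x hx g ↦ ?_⟩
  have hg : g ∈ Submonoid.closure (T ∪ T⁻¹) := by
    rw [← closure_toSubmonoid, hT]
    trivial
  induction hg using Submonoid.closure_induction generalizing x with
  | mem t ht =>
    rcases ht with ht | ht
    · exact conj_mem_of_gen t (fun s hs ↦ (hconj t ht s hs).1) x hx
    · exact conj_mem_of_gen t (fun s hs ↦ by simpa using (hconj t⁻¹ ht s hs).2) x hx
  | one => simpa using hx
  | mul g g' _ _ ih ih' => simpa [mul_assoc] using ih _ (ih' x hx)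

end Subgroup

section Conj

variable {G : Type*} [Group G] {a b : G} {r : ℤ}

theorem inv_pow_mul_zpow_mul_pow_of_inv_mul_mul_eq (h : b⁻¹ * a * b = a ^ r) (j : ℤ) (k : ℕ) :
    (b ^ k)⁻¹ * a ^ j * b ^ k = a ^ (j * r ^ k) := by
  induction k generalizing j with
  | zero => simp
  | succ k ih =>
    calc (b ^ (k + 1))⁻¹ * a ^ j * b ^ (k + 1)
        = b⁻¹ * ((b ^ k)⁻¹ * a ^ j * b ^ k) * b := by group
      _ = (b⁻¹ * a * b) ^ (j * r ^ k) := by simpa [ih] using (conj_zpow (a := b⁻¹)).symm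
      _ = a ^ (j * r ^ (k + 1)) := by rw [h, ← zpow_mul]; ring_nf

theorem inv_mul_pow_mul_of_inv_mul_mul_eq (h : b⁻¹ * a * b = a ^ r) (k : ℕ) :
    a⁻¹ * b ^ k * a = b ^ k * a ^ (1 - r ^ k) := by
  calc a⁻¹ * b ^ k * a = b ^ k * ((b ^ k)⁻¹ * a ^ (-1 : ℤ) * b ^ k) * a := by group
    _ = b ^ k * a ^ (1 - r ^ k) := by
      rw [inv_pow_mul_zpow_mul_pow_of_inv_mul_mul_eq h, mul_assoc, ← zpow_add_one]
      ring_nf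

theorem mul_pow_mul_inv_of_inv_mul_mul_eq (h : b⁻¹ * a * b = a ^ r) (k : ℕ) :
    a * b ^ k * a⁻¹ = b ^ k * a ^ (r ^ k - 1) := by
  calc a * b ^ k * a⁻¹ = b ^ k * ((b ^ k)⁻¹ * a ^ (1 : ℤ) * b ^ k) * a⁻¹ := by group
    _ = b ^ k * a ^ (r ^ k - 1) := by
      rw [inv_pow_mul_zpow_mul_pow_of_inv_mul_mul_eq h, mul_assoc, ← zpow_sub_one, one_mul]

end Conj

namespace ZM

variable (m n : ℕ) (r : ℤ)

theorem ZMb_pow_eq_one : ZMb m n r ^ n = 1 := by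
  simpa [ZMb, PresentedGroup.of] using
    PresentedGroup.one_of_mem (rels := ZMrels m n r) (x := FreeGroup.of false ^ n) (by simp [ZMrels])

theorem ZMb_inv_mul_ZMa_mul_ZMb : (ZMb m n r)⁻¹ * ZMa m n r * ZMb m n r = ZMa m n r ^ r := by
  have := PresentedGroup.one_of_mem (rels := ZMrels m n r) (by simp [ZMrels] :
    (FreeGroup.of false)⁻¹ * FreeGroup.of true * FreeGroup.of false * (FreeGroup.of true) ^ (-r)
      ∈ ZMrels m n r)
  simpa [ZMa, ZMb, PresentedGroup.of, zpow_neg, mul_inv_eq_one] using this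

theorem closure_ZMa_ZMb : Subgroup.closure {ZMa m n r, ZMb m n r} = ⊤ := by
  rw [← PresentedGroup.closure_range_of]
  congr
  ext g
  simp [ZMa, ZMb, or_comm]

section Lift

variable {m n r} {G : Type*} [Group G] {x y : G}

def lift (hx : x ^ m = 1) (hy : y ^ n = 1) (hxy : y⁻¹ * x * y = x ^ r) : ZM m n r →* G :=
  PresentedGroup.toGroup (f := fun i ↦ cond i x y) <| by
    rintro w (rfl | rfl | rfl) <;> simp [hx, hy, hxy]

variable (hx : x ^ m = 1) (hy : y ^ n = 1) (hxy : y⁻¹ * x * y = x ^ r)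

@[simp] theorem lift_ZMa : lift hx hy hxy (ZMa m n r) = x := PresentedGroup.toGroup.of _

@[simp] theorem lift_ZMb : lift hx hy hxy (ZMb m n r) = y := PresentedGroup.toGroup.of _

end Lift

variable {m n r}

theorem exists_hom_perm_zmod (hn : 0 < n) (hr : (m : ℤ) ∣ r ^ n - 1) {m₁ : ℕ} (hm₁ : m₁ ∣ m) :
    ∃ F : ZM m n r →* Equiv.Perm (ZMod m₁),
      (∀ (j : ℤ) (z : ZMod m₁), (F (ZMa m n r) ^ j) z = j + z) ∧
      ∃ c : ZMod m₁, ∀ z, F (ZMb m n r) z = c * z := by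
  obtain ⟨u, hu, hun⟩ : ∃ u : (ZMod m₁)ˣ, (u : ZMod m₁) = r ∧ u ^ n = 1 := by
    have := (ZMod.intCast_zmod_eq_zero_iff_dvd _ m₁).2 ((Int.natCast_dvd_natCast.2 hm₁).trans hr)
    push_cast at this
    have hr₁ := sub_eq_zero.1 this
    exact ⟨Units.ofPowEqOne _ n hr₁ hn.ne', rfl, Units.pow_ofPowEqOne hr₁ hn.ne'⟩
  let x := MulAction.toPermHom (Multiplicative (ZMod m₁)) (ZMod m₁) (Multiplicative.ofAdd 1)
  let y := MulAction.toPermHom (ZMod m₁)ˣ (ZMod m₁) u⁻¹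
  have x_zpow (j : ℤ) (z : ZMod m₁) : (x ^ j) z = j + z := by
    rw [← map_zpow]
    simp [← ofAdd_zsmul]
  have y_zpow (j : ℤ) (z : ZMod m₁) : (y ^ j) z = ((u⁻¹ ^ j : (ZMod m₁)ˣ) : ZMod m₁) * z := by
    rw [← map_zpow]
    rfl
  have hx : x ^ m = 1 := by
    ext z
    simpa [(ZMod.natCast_eq_zero_iff _ _).2 hm₁] using x_zpow m z
  have hy : y ^ n = 1 := by
    rw [← map_pow, inv_pow, hun, inv_one, map_one]
  have hxy : y⁻¹ * x * y = x ^ r := by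
    ext z
    have hx₁ (w : ZMod m₁) : x w = 1 + w := by simpa using x_zpow 1 w
    have hy₁ : y z = ↑u⁻¹ * z := by simpa using y_zpow 1 z
    have hy_inv (w : ZMod m₁) : y⁻¹ w = u * w := by simpa using y_zpow (-1) w
    rw [Equiv.Perm.mul_apply, Equiv.Perm.mul_apply, hy₁, hx₁, hy_inv, x_zpow, mul_add,
      Units.mul_inv_cancel_left, hu, mul_one]
  exact ⟨lift hx hy hxy, by simpa using x_zpow, _, by simpa using y_zpow 1⟩

theorem dvd_of_ZMa_zpow_mem_closure (hn : 0 < n) (hr : (m : ℤ) ∣ r ^ n - 1)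
    {m₁ : ℕ} (hm₁ : m₁ ∣ m) (n₁ : ℕ) {k : ℤ}
    (hk : ZMa m n r ^ k ∈ Subgroup.closure {ZMa m n r ^ m₁, ZMb m n r ^ n₁}) :
    (m₁ : ℤ) ∣ k := by
  obtain ⟨F, hFa, c, hFb⟩ := exists_hom_perm_zmod hn hr hm₁
  let S := MulAction.stabilizer (Equiv.Perm (ZMod m₁)) (0 : ZMod m₁)
  have hle : Subgroup.closure {ZMa m n r ^ m₁, ZMb m n r ^ n₁} ≤ S.comap F := by
    rw [Subgroup.closure_le]
    rintro _ (rfl | rfl) <;> rw [SetLike.mem_coe, Subgroup.mem_comap, map_pow]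
    · simpa [S] using hFa m₁ 0
    · exact S.pow_mem (by simpa [S] using hFb 0) n₁
  rw [← ZMod.intCast_zmod_eq_zero_iff_dvd, ← add_zero (k : ZMod m₁), ← hFa k 0, ← map_zpow]
  exact hle hk

theorem normal_closure_of_dvd (hn : 0 < n) {m₁ n₁ : ℕ} (h : (m₁ : ℤ) ∣ r ^ n₁ - 1) :
    (Subgroup.closure {ZMa m n r ^ m₁, ZMb m n r ^ n₁}).Normal := by
  have hab := ZMb_inv_mul_ZMa_mul_ZMb m n r
  have hb : ZMb m n r ^ n₁ ∈ Subgroup.closure {ZMa m n r ^ m₁, ZMb m n r ^ n₁} :=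
    Subgroup.subset_closure (by simp)
  have ha (i : ℤ) (hi : (m₁ : ℤ) ∣ i) :
      ZMa m n r ^ i ∈ Subgroup.closure {ZMa m n r ^ m₁, ZMb m n r ^ n₁} := by
    obtain ⟨t, rfl⟩ := hi
    rw [zpow_mul, zpow_natCast]
    exact Subgroup.zpow_mem _ (Subgroup.subset_closure (by simp)) t
  have hb_inv : ZMb m n r ^ (n - 1) = (ZMb m n r)⁻¹ :=
    eq_inv_of_mul_eq_one_left (by rw [← pow_succ, Nat.sub_add_cancel hn, ZMb_pow_eq_one])
  have hconj_by_b_pow (k : ℕ) := inv_pow_mul_zpow_mul_pow_of_inv_mul_mul_eq hab m₁ k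
  simp only [zpow_natCast] at hconj_by_b_pow
  apply Subgroup.normal_closure_of_conj_mem (closure_ZMa_ZMb m n r)
  rintro t (rfl | rfl) s (rfl | rfl)
  · have hA := ha m₁ dvd_rfl
    exact ⟨by group; exact hA, by group; exact hA⟩
  · rw [mul_pow_mul_inv_of_inv_mul_mul_eq hab, inv_mul_pow_mul_of_inv_mul_mul_eq hab]
    exact ⟨Subgroup.mul_mem _ hb (ha _ h), Subgroup.mul_mem _ hb (ha _ (dvd_sub_comm.1 h))⟩
  · have h₁ := hconj_by_b_pow (n - 1)
    have h₂ := hconj_by_b_pow 1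
    rw [hb_inv, inv_inv] at h₁
    rw [pow_one, pow_one] at h₂
    rw [h₁, h₂]
    exact ⟨ha _ (dvd_mul_right _ _), ha _ (dvd_mul_right _ _)⟩
  · exact ⟨by group; exact hb, by group; exact hb⟩

theorem dvd_of_normal_closure (hn : 0 < n) (hr : (m : ℤ) ∣ r ^ n - 1) {m₁ n₁ : ℕ} (hm₁ : m₁ ∣ m)
    (hN : (Subgroup.closure {ZMa m n r ^ m₁, ZMb m n r ^ n₁}).Normal) :
    (m₁ : ℤ) ∣ r ^ n₁ - 1 := by
  have hb : ZMb m n r ^ n₁ ∈ Subgroup.closure {ZMa m n r ^ m₁, ZMb m n r ^ n₁} :=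
    Subgroup.subset_closure (by simp)
  have hconj := hN.conj_mem _ hb (ZMa m n r)⁻¹
  rw [inv_inv, inv_mul_pow_mul_of_inv_mul_mul_eq (ZMb_inv_mul_ZMa_mul_ZMb m n r),
    Subgroup.mul_mem_cancel_left _ hb] at hconj
  exact dvd_sub_comm.1 (dvd_of_ZMa_zpow_mem_closure hn hr hm₁ n₁ hconj)

end ZM

theorem stmt3_general (m n : ℕ) (r : ℤ) (hn : 0 < n)
    (hr : (m : ℤ) ∣ r ^ n - 1)
    (m₁ n₁ : ℕ) (hm1 : m₁ ∣ m) :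
    (Subgroup.closure {ZMa m n r ^ m₁, ZMb m n r ^ n₁} : Subgroup (ZM m n r)).Normal ↔
      m₁ ∣ Int.gcd (m : ℤ) (r ^ n₁ - 1) := by
  rw [Int.dvd_gcd_iff, and_iff_right (Int.natCast_dvd_natCast.2 hm1)]
  exact ⟨ZM.dvd_of_normal_closure hn hr hm1, ZM.normal_closure_of_dvd hn⟩

theorem stmt3 (m n : ℕ) (r : ℤ) (hm : 0 < m) (hn : 0 < n)
    (hco : Nat.Coprime m n) (hco2 : IsCoprime (m : ℤ) (r - 1))
    (hr : (m : ℤ) ∣ r ^ n - 1)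
    (m₁ n₁ : ℕ) (hm1 : m₁ ∣ m) (hn1 : n₁ ∣ n) :
    (Subgroup.closure {ZMa m n r ^ m₁, ZMb m n r ^ n₁} : Subgroup (ZM m n r)).Normal ↔
      m₁ ∣ Int.gcd (m : ℤ) (r ^ n₁ - 1) :=
  stmt3_general m n r hn hr m₁ n₁ hm1
end

section
/- For divisors m₁, m₂ of m and n₁, n₂ of n with m₁ | gcd(m, r^{n₁}−1) and m₂ | gcd(m, r^{n₂}−1), the normal subgroup ⟨a^{m₁}, b^{n₁}⟩ of ZM(m,n,r) is contained in ⟨a^{m₂}, b^{n₂}⟩ if and only if m₂ | m₁ and n₂ | n₁. -/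
-- auxiliary lemmas

lemma zmod_mul_mem_zmultiples {m : ℕ} [NeZero m] (c : ZMod m) {x : ZMod m} (d : ZMod m)
    (h : x ∈ AddSubgroup.zmultiples d) : c * x ∈ AddSubgroup.zmultiples d := by
  obtain ⟨z, rfl⟩ := h
  have h1 : c * (z • d) = z • ((ZMod.val c) • d) := by
    rw [nsmul_eq_mul, mul_smul_comm, ZMod.natCast_val, ZMod.cast_id]
  rw [h1]
  exact AddSubgroup.zsmul_mem _ (AddSubgroup.nsmul_mem _ (AddSubgroup.mem_zmultiples d) _) _

lemma dvd_of_zmod_mem {m a b : ℕ} (hb : b ∣ m)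
    (h : ((a : ZMod m)) ∈ AddSubgroup.zmultiples ((b : ZMod m))) : b ∣ a := by
  obtain ⟨z, hz⟩ := h
  have h0 : ((z * b - a : ℤ) : ZMod m) = 0 := by
    push_cast
    rw [sub_eq_zero, ← hz]
    simp [zsmul_eq_mul]
  have hmd : (m : ℤ) ∣ z * b - a := (ZMod.intCast_zmod_eq_zero_iff_dvd _ _).mp h0
  have hb' : (b : ℤ) ∣ z * b - a := dvd_trans (Int.natCast_dvd_natCast.mpr hb) hmd
  have h1 : (b : ℤ) ∣ z * b := ⟨z, mul_comm z b⟩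
  have h2 : (b : ℤ) ∣ (a : ℤ) := by
    have := dvd_sub h1 hb'
    rwa [sub_sub_cancel] at this
  exact_mod_cast h2

-- the unit action
def unitPhi (m : ℕ) : (ZMod m)ˣ →* MulAut (Multiplicative (ZMod m)) :=
  MonoidHom.mk' (fun u => AddEquiv.toMultiplicative (DistribMulAction.toAddAut (ZMod m)ˣ (ZMod m) u))
    (by
      intro u v
      ext x
      simp [MulAut.mul_apply, mul_smul])

lemma unitPhi_apply (m : ℕ) (u : (ZMod m)ˣ) (x : Multiplicative (ZMod m)) :
    Multiplicative.toAdd (unitPhi m u x) = (u : ZMod m) * Multiplicative.toAdd x := by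
  simp [unitPhi, Units.smul_def]

lemma sdp_helper {N G : Type*} [Group N] [Group G] (φ : G →* MulAut N) (g : G) (x z : N) :
    (SemidirectProduct.inr (φ := φ) g)⁻¹ * SemidirectProduct.inl x *
      SemidirectProduct.inr g * SemidirectProduct.inl z =
    SemidirectProduct.inl (φ g⁻¹ x * z) := by
  rw [map_mul, SemidirectProduct.inl_aut, map_inv, inv_inv]

def Hm (m m₂ : ℕ) [NeZero m] : Subgroup (Multiplicative (ZMod m) ⋊[unitPhi m] (ZMod m)ˣ) where
  carrier := {p | Multiplicative.toAdd p.left ∈ AddSubgroup.zmultiples ((m₂ : ZMod m))}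
  one_mem' := by
    show Multiplicative.toAdd ((1 : Multiplicative (ZMod m) ⋊[unitPhi m] (ZMod m)ˣ)).left ∈
      AddSubgroup.zmultiples ((m₂ : ZMod m))
    simpa using AddSubgroup.zero_mem (AddSubgroup.zmultiples ((m₂ : ZMod m)))
  mul_mem' := by
    intro p q hp hq
    simp only [Set.mem_setOf_eq, SemidirectProduct.mul_left, toAdd_mul] at hp hq ⊢
    refine AddSubgroup.add_mem _ hp ?_
    rw [unitPhi_apply]
    exact zmod_mul_mem_zmultiples _ _ hq
  inv_mem' := by
    intro p hp
    simp only [Set.mem_setOf_eq, SemidirectProduct.inv_left] at hp ⊢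
    rw [unitPhi_apply]
    exact zmod_mul_mem_zmultiples _ _ (by simpa using AddSubgroup.neg_mem _ hp)

lemma mem_Hm {m m₂ : ℕ} [NeZero m] (p : Multiplicative (ZMod m) ⋊[unitPhi m] (ZMod m)ˣ) :
    p ∈ Hm m m₂ ↔ Multiplicative.toAdd p.left ∈ AddSubgroup.zmultiples ((m₂ : ZMod m)) :=
  Iff.rfl

def Hnn (n n₂ : ℕ) : Subgroup (Multiplicative (ZMod n)) :=
  AddSubgroup.toSubgroup (AddSubgroup.zmultiples ((n₂ : ZMod n)))

lemma mem_Hnn {n n₂ : ℕ} (x : Multiplicative (ZMod n)) :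
    x ∈ Hnn n n₂ ↔ Multiplicative.toAdd x ∈ AddSubgroup.zmultiples ((n₂ : ZMod n)) :=
  Iff.rfl

lemma ofAdd_one_pow {m : ℕ} (k : ℕ) :
    (Multiplicative.ofAdd (1 : ZMod m)) ^ k = Multiplicative.ofAdd ((k : ZMod m)) := by
  rw [← ofAdd_nsmul]
  congr 1
  simp [nsmul_eq_mul]

theorem stmt10 (m n : ℕ) (r : ℤ) (hm : 0 < m) (hn : 0 < n)
    (hco : Nat.Coprime m n) (hco2 : IsCoprime (m : ℤ) (r - 1))
    (hr : (m : ℤ) ∣ r ^ n - 1)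
    (m₁ m₂ n₁ n₂ : ℕ) (hm1 : m₁ ∣ m) (hm2 : m₂ ∣ m) (hn1 : n₁ ∣ n) (hn2 : n₂ ∣ n)
    (hg1 : m₁ ∣ Int.gcd (m : ℤ) (r ^ n₁ - 1)) (hg2 : m₂ ∣ Int.gcd (m : ℤ) (r ^ n₂ - 1)) :
    (Subgroup.closure {ZMa m n r ^ m₁, ZMb m n r ^ n₁} : Subgroup (ZM m n r)) ≤
        Subgroup.closure {ZMa m n r ^ m₂, ZMb m n r ^ n₂} ↔
      m₂ ∣ m₁ ∧ n₂ ∣ n₁ := by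
  haveI : NeZero m := ⟨hm.ne'⟩
  constructor
  · intro h
    have ha1 : ZMa m n r ^ m₁ ∈ Subgroup.closure {ZMa m n r ^ m₂, ZMb m n r ^ n₂} :=
      h (Subgroup.subset_closure (Set.mem_insert _ _))
    have hb1 : ZMb m n r ^ n₁ ∈ Subgroup.closure {ZMa m n r ^ m₂, ZMb m n r ^ n₂} :=
      h (Subgroup.subset_closure (by right; rfl))
    constructor
    · -- m part, via semidirect product
      have hru : ((r : ZMod m)) ^ n = 1 := by
        have h0 : ((r ^ n - 1 : ℤ) : ZMod m) = 0 := (ZMod.intCast_zmod_eq_zero_iff_dvd _ _).mpr hr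
        have h1 := sub_eq_zero.mp (by push_cast at h0 ⊢; exact h0)
        exact_mod_cast h1
      have hu : IsUnit ((r : ZMod m)) := IsUnit.of_pow_eq_one hru hn.ne'
      set u : (ZMod m)ˣ := hu.unit with hudef
      have huval : (u : ZMod m) = (r : ZMod m) := hu.unit_spec
      have hun : u ^ n = 1 := by
        ext
        rw [Units.val_pow_eq_pow_val, huval, hru, Units.val_one]
      let f : Bool → Multiplicative (ZMod m) ⋊[unitPhi m] (ZMod m)ˣ := fun b =>
        if b then SemidirectProduct.inl (Multiplicative.ofAdd (1 : ZMod m))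
        else SemidirectProduct.inr u⁻¹
      have hrel : ∀ w ∈ ZMrels m n r, FreeGroup.lift f w = 1 := by
        rintro w (rfl | rfl | rfl)
        · rw [map_pow, FreeGroup.lift_apply_of]
          simp only [f, if_pos (rfl : (true : Bool) = true), ← map_pow]
          rw [ofAdd_one_pow m, ZMod.natCast_self, ofAdd_zero, map_one]
        · rw [map_pow, FreeGroup.lift_apply_of]
          simp only [f, if_neg Bool.false_ne_true]
          rw [← map_pow, inv_pow, hun, inv_one, map_one]
        · simp only [map_mul, map_inv, map_zpow, FreeGroup.lift_apply_of]
          simp only [f, if_neg Bool.false_ne_true, if_pos (rfl : (true : Bool) = true)]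
          rw [← map_zpow, sdp_helper, inv_inv]
          have hz : (Multiplicative.ofAdd (1 : ZMod m)) ^ (-r)
              = Multiplicative.ofAdd (-(r : ZMod m)) := by
            rw [← ofAdd_zsmul]
            congr 1
            rw [zsmul_eq_mul]
            push_cast
            ring
          have hφu : unitPhi m u (Multiplicative.ofAdd (1 : ZMod m))
              = Multiplicative.ofAdd ((r : ZMod m)) := by
            apply Multiplicative.toAdd.injective
            rw [unitPhi_apply, huval]
            simp
          rw [hz, hφu, ← ofAdd_add, add_neg_cancel, ofAdd_zero, map_one]
      set F := PresentedGroup.toGroup hrel with hFdef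
      have hFa : F (ZMa m n r) = SemidirectProduct.inl (Multiplicative.ofAdd (1 : ZMod m)) :=
        PresentedGroup.toGroup.of hrel
      have hFb : F (ZMb m n r) = SemidirectProduct.inr u⁻¹ :=
        PresentedGroup.toGroup.of hrel
      have hmemH : ∀ k : ℕ, (F (ZMa m n r) ^ k ∈ Hm m m₂ ↔
          ((k : ZMod m)) ∈ AddSubgroup.zmultiples ((m₂ : ZMod m))) := by
        intro k
        rw [hFa, ← map_pow, ofAdd_one_pow k, mem_Hm, SemidirectProduct.left_inl, toAdd_ofAdd]
      have hsub : Subgroup.closure {ZMa m n r ^ m₂, ZMb m n r ^ n₂} ≤ (Hm m m₂).comap F := by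
        rw [Subgroup.closure_le]
        intro x hx
        simp only [Set.mem_insert_iff, Set.mem_singleton_iff] at hx
        rcases hx with rfl | rfl
        · rw [SetLike.mem_coe, Subgroup.mem_comap, map_pow]
          exact (hmemH m₂).mpr (AddSubgroup.mem_zmultiples _)
        · rw [SetLike.mem_coe, Subgroup.mem_comap, map_pow, hFb, ← map_pow, mem_Hm,
            SemidirectProduct.left_inr]
          simpa using AddSubgroup.zero_mem _
      have hmem : F (ZMa m n r ^ m₁) ∈ Hm m m₂ := hsub ha1
      rw [map_pow, hmemH m₁] at hmem
      exact dvd_of_zmod_mem hm2 hmem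
    · -- n part, via abelian quotient
      let g : Bool → Multiplicative (ZMod n) := fun b =>
        if b then 1 else Multiplicative.ofAdd (1 : ZMod n)
      have hrel : ∀ w ∈ ZMrels m n r, FreeGroup.lift g w = 1 := by
        rintro w (rfl | rfl | rfl)
        · rw [map_pow, FreeGroup.lift_apply_of]
          simp [g]
        · rw [map_pow, FreeGroup.lift_apply_of]
          simp only [g, if_neg Bool.false_ne_true]
          rw [ofAdd_one_pow n, ZMod.natCast_self, ofAdd_zero]
        · simp only [map_mul, map_inv, map_zpow, FreeGroup.lift_apply_of]
          simp only [g, if_neg Bool.false_ne_true, if_pos (rfl : (true : Bool) = true)]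
          group
      set P := PresentedGroup.toGroup hrel with hPdef
      have hPa : P (ZMa m n r) = 1 := PresentedGroup.toGroup.of hrel
      have hPb : P (ZMb m n r) = Multiplicative.ofAdd (1 : ZMod n) :=
        PresentedGroup.toGroup.of hrel
      have hmemHn : ∀ k : ℕ, (P (ZMb m n r) ^ k ∈ Hnn n n₂ ↔
          ((k : ZMod n)) ∈ AddSubgroup.zmultiples ((n₂ : ZMod n))) := by
        intro k
        rw [hPb, ofAdd_one_pow k, mem_Hnn, toAdd_ofAdd]
      have hsub : Subgroup.closure {ZMa m n r ^ m₂, ZMb m n r ^ n₂} ≤ (Hnn n n₂).comap P := by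
        rw [Subgroup.closure_le]
        intro x hx
        simp only [Set.mem_insert_iff, Set.mem_singleton_iff] at hx
        rcases hx with rfl | rfl
        · rw [SetLike.mem_coe, Subgroup.mem_comap, map_pow, hPa, one_pow]
          exact Subgroup.one_mem _
        · rw [SetLike.mem_coe, Subgroup.mem_comap, map_pow]
          exact (hmemHn n₂).mpr (AddSubgroup.mem_zmultiples _)
      have hmem : P (ZMb m n r ^ n₁) ∈ Hnn n n₂ := hsub hb1
      rw [map_pow, hmemHn n₁] at hmem
      exact dvd_of_zmod_mem hn2 hmem
  · rintro ⟨⟨k, rfl⟩, ⟨l, rfl⟩⟩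
    rw [Subgroup.closure_le]
    intro x hx
    simp only [Set.mem_insert_iff, Set.mem_singleton_iff] at hx
    rcases hx with rfl | rfl
    · rw [pow_mul]
      refine Subgroup.pow_mem _ (Subgroup.subset_closure ?_) _
      exact Set.mem_insert _ _
    · rw [pow_mul]
      refine Subgroup.pow_mem _ (Subgroup.subset_closure ?_) _
      right
      rfl
end

section
/- If the lattice of normal subgroups of ZM(m,n,r) is totally ordered (a chain), then n is a prime power. -/
lemma ZMhom (m n : ℕ) (r : ℤ) (p : ℕ) (hp : p ∣ n) :
    ∃ φ : ZM m n r →* Multiplicative (ZMod p),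
      φ (ZMb m n r) = Multiplicative.ofAdd 1 := by
  have h : ∀ rel ∈ ZMrels m n r,
      FreeGroup.lift (fun x : Bool => if x then (1 : Multiplicative (ZMod p))
        else Multiplicative.ofAdd 1) rel = 1 := by
    intro rel hrel
    simp only [ZMrels, Set.mem_insert_iff, Set.mem_singleton_iff] at hrel
    rcases hrel with rfl | rfl | rfl
    · simp
    · rw [map_pow, FreeGroup.lift_apply_of]
      simp only [if_neg Bool.false_ne_true]
      rw [← ofAdd_nsmul, nsmul_eq_mul, mul_one]
      rw [(ZMod.natCast_eq_zero_iff n p).mpr hp]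
      rfl
    · simp
  exact ⟨PresentedGroup.toGroup h, PresentedGroup.toGroup.of h⟩

lemma ZMker_lemma (m n : ℕ) (r : ℤ) {p q : ℕ} (hp : p.Prime) (hq : q.Prime)
    (hpn : p ∣ n) (hqn : q ∣ n) (hne : p ≠ q)
    {φp : ZM m n r →* Multiplicative (ZMod p)}
    {φq : ZM m n r →* Multiplicative (ZMod q)}
    (hbp : φp (ZMb m n r) = Multiplicative.ofAdd 1)
    (hbq : φq (ZMb m n r) = Multiplicative.ofAdd 1) :
    ¬ φp.ker ≤ φq.ker := by
  intro hle
  have h1 : ZMb m n r ^ p ∈ φp.ker := by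
    simp only [MonoidHom.mem_ker, map_pow, hbp]
    rw [← ofAdd_nsmul, nsmul_eq_mul, mul_one, ZMod.natCast_self]
    rfl
  have h2 := hle h1
  simp only [MonoidHom.mem_ker, map_pow, hbq] at h2
  rw [← ofAdd_nsmul, nsmul_eq_mul, mul_one] at h2
  have : (p : ZMod q) = 0 := by
    have := Multiplicative.ofAdd.injective (h2.trans rfl)
    simpa using this
  rw [ZMod.natCast_eq_zero_iff] at this
  exact hne ((Nat.prime_dvd_prime_iff_eq hq hp).mp this).symm

theorem stmt13 (m n : ℕ) (r : ℤ) (hm : 0 < m) (hn : 0 < n)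
    (hco : Nat.Coprime m n) (hco2 : IsCoprime (m : ℤ) (r - 1))
    (hr : (m : ℤ) ∣ r ^ n - 1)
    (hchain : ∀ H K : Subgroup (ZM m n r), H.Normal → K.Normal → H ≤ K ∨ K ≤ H) :
    ∃ q k : ℕ, q.Prime ∧ n = q ^ k := by
  by_contra hnp
  push_neg at hnp
  have hn1 : n ≠ 1 := fun h => hnp 2 0 Nat.prime_two (by simp [h])
  have hpq : ∃ p q : ℕ, p.Prime ∧ q.Prime ∧ p ∣ n ∧ q ∣ n ∧ p ≠ q := by
    by_contra hc
    push_neg at hc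
    have hp : n.minFac.Prime := Nat.minFac_prime hn1
    have huniq : ∀ {d : ℕ}, d.Prime → d ∣ n → d = n.minFac := fun hd hdn =>
      (hc n.minFac _ hp hd (Nat.minFac_dvd n) hdn).symm
    exact hnp n.minFac _ hp (Nat.eq_prime_pow_of_unique_prime_dvd hn.ne' huniq)
  obtain ⟨p, q, hp, hq, hpn, hqn, hne⟩ := hpq
  obtain ⟨φp, hbp⟩ := ZMhom m n r p hpn
  obtain ⟨φq, hbq⟩ := ZMhom m n r q hqn
  rcases hchain φp.ker φq.ker (MonoidHom.normal_ker φp) (MonoidHom.normal_ker φq) with h | h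
  · exact ZMker_lemma m n r hp hq hpn hqn hne hbp hbq h
  · exact ZMker_lemma m n r hq hp hqn hpn hne.symm hbq hbp h
end
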